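/- Let 𝔑 ⊂ [0,1] be a finite set of rational numbers. Then the hyperstandard set Φ(𝔑) = {1 - r/m : r ∈ 𝔑, m ∈ ℕ, m ≥ 1} ∩ [0,1] satisfies the descending chain condition: every non-increasing sequence of elements of Φ(𝔑) is eventually constant. -/
import Mathlib


/-- The hyperstandard set `Φ(𝔑) = {1 - r/m : r ∈ 𝔑, m ∈ ℕ, m ≥ 1} ∩ [0,1]`
associated to a finite set `𝔑` of rationals. -/
def hyperstandard (N : Finset ℚ) : Set ℝ :=
  {x : ℝ | ∃ r ∈ N, ∃ m : ℕ, 0 < m ∧ x = 1 - (r : ℝ) / m} ∩ Set.Icc 0 1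

/-- For a finite set `𝔑 ⊂ [0,1]` of rationals, the hyperstandard set `Φ(𝔑)` satisfies
the descending chain condition: every non-increasing sequence in `Φ(𝔑)` is eventually
constant. -/
theorem hyperstandard_DCC (N : Finset ℚ) (hN : ∀ r ∈ N, 0 ≤ r ∧ r ≤ 1)
    (f : ℕ → ℝ) (hf : ∀ i, f i ∈ hyperstandard N) (hmono : Antitone f) :
    ∃ k : ℕ, ∀ j : ℕ, k ≤ j → f j = f k := by
  classical
  have hmem : ∀ i, ∃ r ∈ N, ∃ mm : ℕ, 0 < mm ∧ f i = 1 - (r : ℝ) / mm := fun i => (hf i).1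
  choose r hrN m hmpos hfr using hmem
  set g : ℕ → {q // q ∈ N} := fun i => ⟨r i, hrN i⟩ with hg
  obtain ⟨r0, hr0⟩ := Finite.exists_infinite_fiber g
  have hAinf : (g ⁻¹' {r0}).Infinite := Set.infinite_coe_iff.mp hr0
  have hrA : ∀ i ∈ g ⁻¹' {r0}, r i = (r0 : ℚ) := by
    intro i hi
    have h : g i = r0 := hi
    simpa [hg] using congrArg Subtype.val h
  by_cases h0 : (r0 : ℚ) = 0
  · obtain ⟨k, hk⟩ := hAinf.nonempty
    refine ⟨k, fun j hj => ?_⟩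
    obtain ⟨a, ha, hja⟩ := hAinf.exists_gt j
    have hfa : f a = 1 := by rw [hfr a, hrA a ha, h0]; simp
    have hfk : f k = 1 := by rw [hfr k, hrA k hk, h0]; simp
    have h1 : f a ≤ f j := hmono hja.le
    have h2 : f j ≤ f k := hmono hj
    linarith
  · have hr0pos : (0 : ℝ) < ((r0 : ℚ) : ℝ) := by
      have := (hN r0 r0.2).1
      exact_mod_cast lt_of_le_of_ne this (Ne.symm h0)
    have hanti : ∀ i ∈ g ⁻¹' {r0}, ∀ a ∈ g ⁻¹' {r0}, i ≤ a → m a ≤ m i := by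
      intro i hi a ha hia
      have hf' : f a ≤ f i := hmono hia
      rw [hfr a, hfr i, hrA a ha, hrA i hi] at hf'
      have hdiv : ((r0 : ℚ) : ℝ) / m i ≤ ((r0 : ℚ) : ℝ) / m a := by linarith
      have hmi : (0 : ℝ) < m i := by exact_mod_cast hmpos i
      have hma : (0 : ℝ) < m a := by exact_mod_cast hmpos a
      rw [div_le_div_iff₀ hmi hma] at hdiv
      have hle : (m a : ℝ) ≤ (m i : ℝ) :=
        le_of_mul_le_mul_left (by linarith) hr0pos
      exact_mod_cast hle
    have hne : (m '' (g ⁻¹' {r0})).Nonempty := hAinf.nonempty.image m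
    obtain ⟨k, hkA, hmk⟩ := Nat.sInf_mem hne
    refine ⟨k, fun j hj => ?_⟩
    obtain ⟨a, ha, hja⟩ := hAinf.exists_gt j
    have hma_le : m a ≤ m k := hanti k hkA a ha (hj.trans hja.le)
    have hmk_le : m k ≤ m a := le_trans (le_of_eq hmk) (Nat.sInf_le ⟨a, ha, rfl⟩)
    have hfa : f a = f k := by
      rw [hfr a, hfr k, hrA a ha, hrA k hkA, le_antisymm hma_le hmk_le]
    have h1 : f a ≤ f j := hmono hja.le
    have h2 : f j ≤ f k := hmono hj
    linarith
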